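/- Let A be a commutative ring and V, W finitely generated projective A-modules. Then the second cross-effect of the co-Schur functor L̃^3_1 (defined by the short exact sequence 0 → L̃^3_1(V) → V ⊗ Λ^2(V) → Λ^3(V) → 0) satisfies cr_2(L̃^3_1)(V,W) ≅ (V ⊗ V ⊗ W) ⊕ (V ⊗ W ⊗ W). -/

import Mathlib

open TensorProduct
section AltLib
variable (R : Type*) [CommRing R]

/-- Relations defining the second exterior power. -/
def aq2 (M : Type*) [AddCommGroup M] [Module R M] : Submodule R (M ⊗[R] M) :=
  Submodule.span R {x | ∃ a : M, x = a ⊗ₜ[R] a}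

/-- The second exterior power. -/
abbrev AltSq (M : Type*) [AddCommGroup M] [Module R M] := (M ⊗[R] M) ⧸ aq2 R M

/-- Relations defining the third exterior power. -/
def aq3 (M : Type*) [AddCommGroup M] [Module R M] : Submodule R (M ⊗[R] (M ⊗[R] M)) :=
  Submodule.span R
    ({x | ∃ a c : M, x = a ⊗ₜ[R] (a ⊗ₜ[R] c)} ∪ {x | ∃ a b : M, x = a ⊗ₜ[R] (b ⊗ₜ[R] b)})

/-- The third exterior power. -/
abbrev AltCube (M : Type*) [AddCommGroup M] [Module R M] := (M ⊗[R] (M ⊗[R] M)) ⧸ aq3 R M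

variable {M : Type*} [AddCommGroup M] [Module R M]

/-- Wedging with `v` as a map `Λ² M → Λ³ M`. -/
noncomputable def wedgeAux (v : M) : AltSq R M →ₗ[R] AltCube R M :=
  Submodule.liftQ _ ((aq3 R M).mkQ ∘ₗ TensorProduct.mk R M (M ⊗[R] M) v) (by
    rw [aq2, Submodule.span_le]
    rintro x ⟨a, rfl⟩
    simp only [SetLike.mem_coe, LinearMap.mem_ker, LinearMap.comp_apply,
      TensorProduct.mk_apply, Submodule.mkQ_apply, Submodule.Quotient.mk_eq_zero]
    exact Submodule.subset_span (Or.inr ⟨v, a, rfl⟩))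

lemma wedgeAux_mk (v : M) (x : M ⊗[R] M) :
    wedgeAux R v (Submodule.Quotient.mk x) = Submodule.Quotient.mk (v ⊗ₜ[R] x) := rfl

/-- The wedge `M ⊗ Λ² M → Λ³ M` as a bilinear map. -/
noncomputable def wedgeBil : M →ₗ[R] AltSq R M →ₗ[R] AltCube R M where
  toFun := wedgeAux R
  map_add' v w := by
    refine LinearMap.ext fun x => ?_
    obtain ⟨y, rfl⟩ := Submodule.Quotient.mk_surjective _ x
    simp [wedgeAux_mk, add_tmul, Submodule.Quotient.mk_add]
  map_smul' r v := by
    refine LinearMap.ext fun x => ?_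
    obtain ⟨y, rfl⟩ := Submodule.Quotient.mk_surjective _ x
    simp only [wedgeAux_mk, RingHom.id_apply, LinearMap.smul_apply]
    rw [← Submodule.Quotient.mk_smul, smul_tmul']

/-- The wedge map `M ⊗ Λ² M → Λ³ M`. -/
noncomputable def wedgeMul : M ⊗[R] AltSq R M →ₗ[R] AltCube R M :=
  TensorProduct.lift (wedgeBil R)

/-- The co-Schur functor `L̃³₁`, the kernel of the wedge map `M ⊗ Λ² M → Λ³ M`. -/
noncomputable def coSchurL31 : Submodule R (M ⊗[R] AltSq R M) := LinearMap.ker (wedgeMul R)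

end AltLib

section AltFunctorial
variable {R : Type*} [CommRing R]
variable {M N : Type*} [AddCommGroup M] [Module R M] [AddCommGroup N] [Module R N]

/-- Functoriality of `Λ²`. -/
noncomputable def altSqMap (f : M →ₗ[R] N) : AltSq R M →ₗ[R] AltSq R N :=
  Submodule.mapQ _ _ (TensorProduct.map f f) (by
    rw [aq2, Submodule.span_le]
    rintro x ⟨a, rfl⟩
    simp only [SetLike.mem_coe, Submodule.mem_comap, TensorProduct.map_tmul]
    exact Submodule.subset_span ⟨f a, rfl⟩)

/-- The map induced on `M ⊗ Λ² M` by an endomorphism `p` of `M`;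
the co-Schur functor `L̃³₁` is a subfunctor of this construction. -/
noncomputable def ambMapAlt (p : M →ₗ[R] M) :
    M ⊗[R] AltSq R M →ₗ[R] M ⊗[R] AltSq R M :=
  TensorProduct.map p (altSqMap p)

end AltFunctorial

section Projections
variable (A V W : Type*) [CommRing A] [AddCommGroup V] [Module A V]
  [AddCommGroup W] [Module A W]

/-- First projection-inclusion endomorphism of `V ⊕ W`. -/
noncomputable def prj1 : V × W →ₗ[A] V × W := (LinearMap.inl A V W) ∘ₗ (LinearMap.fst A V W)

/-- Second projection-inclusion endomorphism of `V ⊕ W`. -/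
noncomputable def prj2 : V × W →ₗ[A] V × W := (LinearMap.inr A V W) ∘ₗ (LinearMap.snd A V W)

end Projections

/-- The second cross-effect of the co-Schur functor `L̃³₁`:
the image of `L̃³₁(V ⊕ W)` under the endomorphism `L̃³₁(p₁+p₂) - L̃³₁(p₁) - L̃³₁(p₂)`
(the Eilenberg–Mac Lane cross-effect). -/
noncomputable def cr2CoSchurL31 (A V W : Type*) [CommRing A] [AddCommGroup V] [Module A V]
    [AddCommGroup W] [Module A W] :
    Submodule A ((V × W) ⊗[A] AltSq A (V × W)) :=
  Submodule.map (ambMapAlt (prj1 A V W + prj2 A V W)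
      - ambMapAlt (prj1 A V W) - ambMapAlt (prj2 A V W))
    (coSchurL31 (R := A) (M := V × W))

/-! The idempotents `p₁ ⊗ Λ²p₁` and `p₂ ⊗ Λ²p₂` are orthogonal and preserve `L̃³₁(V ⊕ W)`, so the
cross-effect is the part of `L̃³₁(V ⊕ W)` they kill. Splitting `Λ²(V ⊕ W) = Λ²V ⊕ (V ⊗ W) ⊕ Λ²W`,
that part lives in the four mixed summands `V ⊗ (V ⊗ W)`, `W ⊗ (V ⊗ W)`, `V ⊗ Λ²W`, `W ⊗ Λ²V` of
`(V ⊕ W) ⊗ Λ²(V ⊕ W)`. The components of the wedge in the mixed summands `V ⊗ Λ²W` and `W ⊗ Λ²V`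
of `Λ³(V ⊕ W)` determine the last two coordinates of a kernel element from the first two, so
projecting to `V ⊗ (V ⊗ W) × V ⊗ (W ⊗ W)` is injective on the cross-effect, and an explicit
section shows it is onto. -/

section AltRelations
variable {R : Type*} [CommRing R] {M N X : Type*} [AddCommGroup M] [Module R M]
  [AddCommGroup N] [Module R N] [AddCommGroup X] [Module R X]

lemma LinearMap.map_tmul_comm_eq_neg (g : N ⊗[R] N →ₗ[R] X) (hg : ∀ y, g (y ⊗ₜ y) = 0)
    (y z : N) : g (z ⊗ₜ y) = -g (y ⊗ₜ z) := by
  have h := hg (y + z)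
  rw [add_tmul, tmul_add, tmul_add, map_add, map_add, map_add, hg, hg] at h
  exact eq_neg_of_add_eq_zero_left (by simpa [add_comm] using h)

lemma AltSq.mk_tmul_self (a : M) : (Submodule.Quotient.mk (a ⊗ₜ[R] a) : AltSq R M) = 0 :=
  (Submodule.Quotient.mk_eq_zero _).2 (Submodule.subset_span ⟨a, rfl⟩)

lemma AltSq.mk_tmul_comm (a b : M) :
    (Submodule.Quotient.mk (b ⊗ₜ[R] a) : AltSq R M) = -Submodule.Quotient.mk (a ⊗ₜ[R] b) :=
  (aq2 R M).mkQ.map_tmul_comm_eq_neg AltSq.mk_tmul_self a b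

lemma AltCube.mk_tmul_comm_right (a b c : M) :
    (Submodule.Quotient.mk (a ⊗ₜ[R] (c ⊗ₜ[R] b)) : AltCube R M)
      = -Submodule.Quotient.mk (a ⊗ₜ[R] (b ⊗ₜ[R] c)) :=
  ((aq3 R M).mkQ ∘ₗ TensorProduct.mk R M (M ⊗[R] M) a).map_tmul_comm_eq_neg
    (fun y => (Submodule.Quotient.mk_eq_zero _).2 (Submodule.subset_span (Or.inr ⟨a, y, rfl⟩)))
    b c

lemma AltCube.mk_tmul_comm_left (a b c : M) :
    (Submodule.Quotient.mk (b ⊗ₜ[R] (a ⊗ₜ[R] c)) : AltCube R M)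
      = -Submodule.Quotient.mk (a ⊗ₜ[R] (b ⊗ₜ[R] c)) :=
  ((aq3 R M).mkQ ∘ₗ (TensorProduct.assoc R M M M).toLinearMap ∘ₗ
      (TensorProduct.mk R (M ⊗[R] M) M).flip c).map_tmul_comm_eq_neg
    (fun y => (Submodule.Quotient.mk_eq_zero _).2 (Submodule.subset_span (Or.inl ⟨y, c, rfl⟩)))
    a b

lemma AltCube.mk_tmul_rotate (a b c : M) :
    (Submodule.Quotient.mk (c ⊗ₜ[R] (a ⊗ₜ[R] b)) : AltCube R M)
      = Submodule.Quotient.mk (a ⊗ₜ[R] (b ⊗ₜ[R] c)) := by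
  rw [AltCube.mk_tmul_comm_left a c b, AltCube.mk_tmul_comm_right a b c, neg_neg]

end AltRelations

section Functoriality
variable {R : Type*} [CommRing R] {M N : Type*} [AddCommGroup M] [Module R M]
  [AddCommGroup N] [Module R N]

@[simp] lemma altSqMap_mk (f : M →ₗ[R] N) (y z : M) :
    altSqMap f (Submodule.Quotient.mk (y ⊗ₜ[R] z)) = Submodule.Quotient.mk (f y ⊗ₜ[R] f z) :=
  rfl

@[simp] lemma wedgeMul_tmul_mk (x : M) (t : M ⊗[R] M) :
    wedgeMul R (x ⊗ₜ[R] Submodule.Quotient.mk t) = Submodule.Quotient.mk (x ⊗ₜ[R] t) := rfl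

@[simp] lemma ambMapAlt_tmul (p : M →ₗ[R] M) (x : M) (ω : AltSq R M) :
    ambMapAlt p (x ⊗ₜ[R] ω) = p x ⊗ₜ[R] altSqMap p ω := rfl

lemma ambMapAlt_comp (p q : M →ₗ[R] M) :
    ambMapAlt (R := R) (p ∘ₗ q) = ambMapAlt p ∘ₗ ambMapAlt q := by
  ext; simp

lemma ambMapAlt_id : ambMapAlt (R := R) (LinearMap.id : M →ₗ[R] M) = LinearMap.id := by
  ext; simp

lemma ambMapAlt_zero : ambMapAlt (R := R) (0 : M →ₗ[R] M) = 0 := by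
  ext; simp

noncomputable def altCubeMap (f : M →ₗ[R] N) : AltCube R M →ₗ[R] AltCube R N :=
  Submodule.mapQ _ _ (TensorProduct.map f (TensorProduct.map f f)) (by
    rw [aq3, Submodule.span_le]
    rintro x (⟨a, c, rfl⟩ | ⟨a, b, rfl⟩)
    · exact Submodule.subset_span (Or.inl ⟨f a, f c, rfl⟩)
    · exact Submodule.subset_span (Or.inr ⟨f a, f b, rfl⟩))

lemma wedgeMul_ambMapAlt (p : M →ₗ[R] M) (x : M ⊗[R] AltSq R M) :
    wedgeMul R (ambMapAlt p x) = altCubeMap p (wedgeMul R x) := by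
  rw [← LinearMap.comp_apply, ← LinearMap.comp_apply (altCubeMap p)]
  congr 1
  ext; rfl

lemma ambMapAlt_mem_coSchurL31 (p : M →ₗ[R] M) {x : M ⊗[R] AltSq R M}
    (hx : x ∈ coSchurL31 R) : ambMapAlt p x ∈ coSchurL31 R := by
  simp_all [coSchurL31, wedgeMul_ambMapAlt]

end Functoriality

section CyclicLift
variable {R : Type*} [CommRing R] {M X : Type*} [AddCommGroup M] [Module R M]
  [AddCommGroup X] [Module R X]

variable (R M) in
noncomputable def tensorRotate : M ⊗[R] (M ⊗[R] M) →ₗ[R] M ⊗[R] (M ⊗[R] M) :=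
  LinearMap.lTensor M (TensorProduct.comm R M M).toLinearMap ∘ₗ
    (TensorProduct.leftComm R M M M).toLinearMap

@[simp] lemma tensorRotate_tmul (x y z : M) :
    tensorRotate R M (x ⊗ₜ[R] (y ⊗ₜ[R] z)) = y ⊗ₜ[R] (z ⊗ₜ[R] x) := by
  simp [tensorRotate]

noncomputable def AltCube.liftCyclic (t : M ⊗[R] (M ⊗[R] M) →ₗ[R] X)
    (ht : ∀ x y : M, t (x ⊗ₜ[R] (y ⊗ₜ[R] y)) = 0) : AltCube R M →ₗ[R] X :=
  Submodule.liftQ _ (t + t ∘ₗ tensorRotate R M + t ∘ₗ tensorRotate R M ∘ₗ tensorRotate R M) (by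
    have hswap (x y z : M) : t (x ⊗ₜ[R] (z ⊗ₜ[R] y)) = -t (x ⊗ₜ[R] (y ⊗ₜ[R] z)) :=
      (t ∘ₗ TensorProduct.mk R M (M ⊗[R] M) x).map_tmul_comm_eq_neg (ht x) y z
    rw [aq3, Submodule.span_le]
    rintro _ (⟨a, c, rfl⟩ | ⟨a, b, rfl⟩)
    · simp [hswap a a c, ht]
    · simp [hswap b b a, ht])

@[simp] lemma AltCube.liftCyclic_mk (t : M ⊗[R] (M ⊗[R] M) →ₗ[R] X)
    (ht : ∀ x y : M, t (x ⊗ₜ[R] (y ⊗ₜ[R] y)) = 0) (x y z : M) :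
    AltCube.liftCyclic t ht (Submodule.Quotient.mk (x ⊗ₜ[R] (y ⊗ₜ[R] z)))
      = t (x ⊗ₜ[R] (y ⊗ₜ[R] z)) + t (y ⊗ₜ[R] (z ⊗ₜ[R] x)) + t (z ⊗ₜ[R] (x ⊗ₜ[R] y)) := by
  simp [AltCube.liftCyclic]

end CyclicLift

lemma Submodule.mem_map_id_sub_sub_iff {R X : Type*} [CommRing R] [AddCommGroup X] [Module R X]
    {e f : X →ₗ[R] X} (he : e ∘ₗ e = e) (hf : f ∘ₗ f = f) (hef : e ∘ₗ f = 0) (hfe : f ∘ₗ e = 0)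
    {L : Submodule R X} (hLe : ∀ x ∈ L, e x ∈ L) (hLf : ∀ x ∈ L, f x ∈ L) {x : X} :
    x ∈ L.map (LinearMap.id - e - f) ↔ x ∈ L ∧ e x = 0 ∧ f x = 0 := by
  constructor
  · rintro ⟨y, hy, rfl⟩
    have he' := LinearMap.congr_fun he y
    have hf' := LinearMap.congr_fun hf y
    have hef' := LinearMap.congr_fun hef y
    have hfe' := LinearMap.congr_fun hfe y
    simp only [LinearMap.comp_apply, LinearMap.zero_apply] at he' hf' hef' hfe'
    refine ⟨L.sub_mem (L.sub_mem hy (hLe y hy)) (hLf y hy), ?_, ?_⟩ <;>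
      simp [he', hf', hef', hfe']
  · rintro ⟨hx, he0, hf0⟩
    exact ⟨x, hx, by simp [he0, hf0]⟩

section CrossEffect
variable (A V W : Type*) [CommRing A] [AddCommGroup V] [Module A V]
  [AddCommGroup W] [Module A W]

@[simp] lemma prj1_apply (x : V × W) : prj1 A V W x = (x.1, 0) := rfl

@[simp] lemma prj2_apply (x : V × W) : prj2 A V W x = (0, x.2) := rfl

lemma ambMapAlt_prj1_comp_prj1 :
    ambMapAlt (prj1 A V W) ∘ₗ ambMapAlt (prj1 A V W) = ambMapAlt (prj1 A V W) := by
  rw [← ambMapAlt_comp]; rfl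

lemma ambMapAlt_prj2_comp_prj2 :
    ambMapAlt (prj2 A V W) ∘ₗ ambMapAlt (prj2 A V W) = ambMapAlt (prj2 A V W) := by
  rw [← ambMapAlt_comp]; rfl

lemma ambMapAlt_prj1_comp_prj2 : ambMapAlt (prj1 A V W) ∘ₗ ambMapAlt (prj2 A V W) = 0 := by
  rw [← ambMapAlt_comp, ← ambMapAlt_zero]; rfl

lemma ambMapAlt_prj2_comp_prj1 : ambMapAlt (prj2 A V W) ∘ₗ ambMapAlt (prj1 A V W) = 0 := by
  rw [← ambMapAlt_comp, ← ambMapAlt_zero]; rfl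

lemma mem_cr2CoSchurL31_iff {x : (V × W) ⊗[A] AltSq A (V × W)} :
    x ∈ cr2CoSchurL31 A V W ↔
      wedgeMul A x = 0 ∧ ambMapAlt (prj1 A V W) x = 0 ∧ ambMapAlt (prj2 A V W) x = 0 := by
  have hsum : prj1 A V W + prj2 A V W = LinearMap.id := by ext <;> simp
  rw [cr2CoSchurL31, hsum, ambMapAlt_id]
  exact Submodule.mem_map_id_sub_sub_iff (ambMapAlt_prj1_comp_prj1 A V W)
    (ambMapAlt_prj2_comp_prj2 A V W) (ambMapAlt_prj1_comp_prj2 A V W)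
    (ambMapAlt_prj2_comp_prj1 A V W) (fun _ => ambMapAlt_mem_coSchurL31 _)
    (fun _ => ambMapAlt_mem_coSchurL31 _)

/-- The `V ⊗ W` component of `Λ²(V ⊕ W) ≅ Λ² V ⊕ (V ⊗ W) ⊕ Λ² W`. -/
noncomputable def altSqMixed : AltSq A (V × W) →ₗ[A] V ⊗[A] W :=
  Submodule.liftQ _ (TensorProduct.map (LinearMap.fst A V W) (LinearMap.snd A V W)
      - TensorProduct.map (LinearMap.fst A V W) (LinearMap.snd A V W) ∘ₗ
        (TensorProduct.comm A (V × W) (V × W)).toLinearMap) (by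
    rw [aq2, Submodule.span_le]
    rintro x ⟨a, rfl⟩
    simp)

@[simp] lemma altSqMixed_mk (y z : V × W) :
    altSqMixed A V W (Submodule.Quotient.mk (y ⊗ₜ[A] z)) = y.1 ⊗ₜ[A] z.2 - z.1 ⊗ₜ[A] y.2 := by
  simp [altSqMixed]

noncomputable def projVVW : (V × W) ⊗[A] AltSq A (V × W) →ₗ[A] V ⊗[A] (V ⊗[A] W) :=
  TensorProduct.map (LinearMap.fst A V W) (altSqMixed A V W)

noncomputable def projVWW : (V × W) ⊗[A] AltSq A (V × W) →ₗ[A] V ⊗[A] (W ⊗[A] W) :=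
  (TensorProduct.leftComm A W V W).toLinearMap ∘ₗ
    TensorProduct.map (LinearMap.snd A V W) (altSqMixed A V W)

noncomputable def projVAltW : (V × W) ⊗[A] AltSq A (V × W) →ₗ[A] V ⊗[A] AltSq A W :=
  TensorProduct.map (LinearMap.fst A V W) (altSqMap (LinearMap.snd A V W))

noncomputable def projWAltV : (V × W) ⊗[A] AltSq A (V × W) →ₗ[A] W ⊗[A] AltSq A V :=
  TensorProduct.map (LinearMap.snd A V W) (altSqMap (LinearMap.fst A V W))

noncomputable def inclVVW : V ⊗[A] (V ⊗[A] W) →ₗ[A] (V × W) ⊗[A] AltSq A (V × W) :=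
  TensorProduct.map (LinearMap.inl A V W)
    ((aq2 A (V × W)).mkQ ∘ₗ TensorProduct.map (LinearMap.inl A V W) (LinearMap.inr A V W))

noncomputable def inclVWW : V ⊗[A] (W ⊗[A] W) →ₗ[A] (V × W) ⊗[A] AltSq A (V × W) :=
  TensorProduct.map (LinearMap.inr A V W)
      ((aq2 A (V × W)).mkQ ∘ₗ TensorProduct.map (LinearMap.inl A V W) (LinearMap.inr A V W)) ∘ₗ
    (TensorProduct.leftComm A V W W).toLinearMap

noncomputable def inclVAltW : V ⊗[A] AltSq A W →ₗ[A] (V × W) ⊗[A] AltSq A (V × W) :=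
  TensorProduct.map (LinearMap.inl A V W) (altSqMap (LinearMap.inr A V W))

noncomputable def inclWAltV : W ⊗[A] AltSq A V →ₗ[A] (V × W) ⊗[A] AltSq A (V × W) :=
  TensorProduct.map (LinearMap.inr A V W) (altSqMap (LinearMap.inl A V W))

section tmul
variable {A V W}

@[simp] lemma projVVW_tmul_mk (x y z : V × W) :
    projVVW A V W (x ⊗ₜ[A] Submodule.Quotient.mk (y ⊗ₜ[A] z))
      = x.1 ⊗ₜ[A] (y.1 ⊗ₜ[A] z.2) - x.1 ⊗ₜ[A] (z.1 ⊗ₜ[A] y.2) := by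
  simp [projVVW, tmul_sub]

@[simp] lemma projVWW_tmul_mk (x y z : V × W) :
    projVWW A V W (x ⊗ₜ[A] Submodule.Quotient.mk (y ⊗ₜ[A] z))
      = y.1 ⊗ₜ[A] (x.2 ⊗ₜ[A] z.2) - z.1 ⊗ₜ[A] (x.2 ⊗ₜ[A] y.2) := by
  simp [projVWW, tmul_sub]

@[simp] lemma projVAltW_tmul_mk (x y z : V × W) :
    projVAltW A V W (x ⊗ₜ[A] Submodule.Quotient.mk (y ⊗ₜ[A] z))
      = x.1 ⊗ₜ[A] Submodule.Quotient.mk (y.2 ⊗ₜ[A] z.2) := rfl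

@[simp] lemma projWAltV_tmul_mk (x y z : V × W) :
    projWAltV A V W (x ⊗ₜ[A] Submodule.Quotient.mk (y ⊗ₜ[A] z))
      = x.2 ⊗ₜ[A] Submodule.Quotient.mk (y.1 ⊗ₜ[A] z.1) := rfl

@[simp] lemma inclVVW_tmul (v v' : V) (w : W) :
    inclVVW A V W (v ⊗ₜ[A] (v' ⊗ₜ[A] w))
      = ((v, 0) : V × W) ⊗ₜ[A] Submodule.Quotient.mk (((v', 0) : V × W) ⊗ₜ[A] (0, w)) := rfl

@[simp] lemma inclVWW_tmul (v : V) (w w' : W) :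
    inclVWW A V W (v ⊗ₜ[A] (w ⊗ₜ[A] w'))
      = ((0, w) : V × W) ⊗ₜ[A] Submodule.Quotient.mk (((v, 0) : V × W) ⊗ₜ[A] (0, w')) := rfl

@[simp] lemma inclVAltW_tmul_mk (v : V) (w w' : W) :
    inclVAltW A V W (v ⊗ₜ[A] Submodule.Quotient.mk (w ⊗ₜ[A] w'))
      = ((v, 0) : V × W) ⊗ₜ[A] Submodule.Quotient.mk (((0, w) : V × W) ⊗ₜ[A] (0, w')) := rfl

@[simp] lemma inclWAltV_tmul_mk (w : W) (v v' : V) :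
    inclWAltV A V W (w ⊗ₜ[A] Submodule.Quotient.mk (v ⊗ₜ[A] v'))
      = ((0, w) : V × W) ⊗ₜ[A] Submodule.Quotient.mk (((v, 0) : V × W) ⊗ₜ[A] (v', 0)) := rfl

end tmul

lemma id_eq_sum_incl_comp_proj :
    LinearMap.id = ambMapAlt (prj1 A V W) + ambMapAlt (prj2 A V W)
      + inclVAltW A V W ∘ₗ projVAltW A V W + inclWAltV A V W ∘ₗ projWAltV A V W
      + inclVVW A V W ∘ₗ projVVW A V W + inclVWW A V W ∘ₗ projVWW A V W := by
  ext <;> simp [Prod.mk_zero_zero] <;> rw [AltSq.mk_tmul_comm, tmul_neg]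

noncomputable def altCubeProjVAltW : AltCube A (V × W) →ₗ[A] V ⊗[A] AltSq A W :=
  AltCube.liftCyclic (TensorProduct.map (LinearMap.fst A V W)
      ((aq2 A W).mkQ ∘ₗ TensorProduct.map (LinearMap.snd A V W) (LinearMap.snd A V W)))
    (fun _ _ => by simp [AltSq.mk_tmul_self])

noncomputable def altCubeProjWAltV : AltCube A (V × W) →ₗ[A] W ⊗[A] AltSq A V :=
  AltCube.liftCyclic (TensorProduct.map (LinearMap.snd A V W)
      ((aq2 A V).mkQ ∘ₗ TensorProduct.map (LinearMap.fst A V W) (LinearMap.fst A V W)))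
    (fun _ _ => by simp [AltSq.mk_tmul_self])

noncomputable def toVAltW : V ⊗[A] (W ⊗[A] W) →ₗ[A] V ⊗[A] AltSq A W :=
  LinearMap.lTensor V (aq2 A W).mkQ

noncomputable def toWAltV : V ⊗[A] (V ⊗[A] W) →ₗ[A] W ⊗[A] AltSq A V :=
  LinearMap.lTensor W (aq2 A V).mkQ ∘ₗ (TensorProduct.comm A (V ⊗[A] V) W).toLinearMap ∘ₗ
    (TensorProduct.assoc A V V W).symm.toLinearMap

@[simp] lemma toVAltW_tmul (v : V) (w w' : W) :
    toVAltW A V W (v ⊗ₜ[A] (w ⊗ₜ[A] w')) = v ⊗ₜ[A] Submodule.Quotient.mk (w ⊗ₜ[A] w') := rfl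

@[simp] lemma toWAltV_tmul (v v' : V) (w : W) :
    toWAltV A V W (v ⊗ₜ[A] (v' ⊗ₜ[A] w)) = w ⊗ₜ[A] Submodule.Quotient.mk (v ⊗ₜ[A] v') := by
  simp [toWAltV]

lemma altCubeProjVAltW_comp_wedgeMul :
    altCubeProjVAltW A V W ∘ₗ wedgeMul A = projVAltW A V W - toVAltW A V W ∘ₗ projVWW A V W := by
  ext <;> simp [altCubeProjVAltW]
  rw [AltSq.mk_tmul_comm, tmul_neg]

lemma altCubeProjWAltV_comp_wedgeMul :
    altCubeProjWAltV A V W ∘ₗ wedgeMul A = projWAltV A V W + toWAltV A V W ∘ₗ projVVW A V W := by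
  ext <;> simp [altCubeProjWAltV]
  rw [AltSq.mk_tmul_comm, tmul_neg]

noncomputable def crossProj :
    (V × W) ⊗[A] AltSq A (V × W) →ₗ[A] (V ⊗[A] (V ⊗[A] W)) × (V ⊗[A] (W ⊗[A] W)) :=
  (projVVW A V W).prod (projVWW A V W)

/-- The correction terms put the image of `inclVVW`, `inclVWW` into the kernel of the wedge. -/
noncomputable def crossSection :
    (V ⊗[A] (V ⊗[A] W)) × (V ⊗[A] (W ⊗[A] W)) →ₗ[A] (V × W) ⊗[A] AltSq A (V × W) :=
  (inclVVW A V W - inclWAltV A V W ∘ₗ toWAltV A V W).coprod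
    (inclVWW A V W + inclVAltW A V W ∘ₗ toVAltW A V W)

lemma crossProj_comp_crossSection : crossProj A V W ∘ₗ crossSection A V W = LinearMap.id := by
  ext <;> simp [crossProj, crossSection]

lemma crossSection_mem_cr2CoSchurL31 (y : (V ⊗[A] (V ⊗[A] W)) × (V ⊗[A] (W ⊗[A] W))) :
    crossSection A V W y ∈ cr2CoSchurL31 A V W := by
  have hwedge : wedgeMul A ∘ₗ crossSection A V W = 0 := by
    ext a b c
    · simp [crossSection, AltCube.mk_tmul_rotate (R := A) ((a, 0) : V × W) (b, 0) (0, c)]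
    · simp [crossSection, AltCube.mk_tmul_comm_left (R := A) ((a, 0) : V × W) (0, b) (0, c)]
  have hprj1 : ambMapAlt (prj1 A V W) ∘ₗ crossSection A V W = 0 := by
    ext <;> simp [crossSection, Prod.mk_zero_zero]
  have hprj2 : ambMapAlt (prj2 A V W) ∘ₗ crossSection A V W = 0 := by
    ext <;> simp [crossSection, Prod.mk_zero_zero]
  exact (mem_cr2CoSchurL31_iff A V W).2 ⟨LinearMap.congr_fun hwedge y,
    LinearMap.congr_fun hprj1 y, LinearMap.congr_fun hprj2 y⟩

lemma eq_zero_of_crossProj_eq_zero {x : (V × W) ⊗[A] AltSq A (V × W)}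
    (hx : x ∈ cr2CoSchurL31 A V W) (hproj : crossProj A V W x = 0) : x = 0 := by
  obtain ⟨hwedge, hprj1, hprj2⟩ := (mem_cr2CoSchurL31_iff A V W).1 hx
  obtain ⟨hVVW, hVWW⟩ := Prod.mk_eq_zero.1 hproj
  have hVAltW : projVAltW A V W x = 0 := by
    simpa [hwedge, hVWW] using
      (LinearMap.congr_fun (altCubeProjVAltW_comp_wedgeMul A V W) x).symm
  have hWAltV : projWAltV A V W x = 0 := by
    simpa [hwedge, hVVW] using
      (LinearMap.congr_fun (altCubeProjWAltV_comp_wedgeMul A V W) x).symm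
  simpa [hprj1, hprj2, hVAltW, hWAltV, hVVW, hVWW] using
    LinearMap.congr_fun (id_eq_sum_incl_comp_proj A V W) x

end CrossEffect

theorem cr2_coSchurL31_iso_general (A V W : Type*) [CommRing A]
    [AddCommGroup V] [Module A V]
    [AddCommGroup W] [Module A W] :
    Nonempty ((cr2CoSchurL31 A V W) ≃ₗ[A]
      (V ⊗[A] (V ⊗[A] W)) × (V ⊗[A] (W ⊗[A] W))) := by
  refine ⟨LinearEquiv.ofBijective (crossProj A V W ∘ₗ (cr2CoSchurL31 A V W).subtype) ⟨?_, ?_⟩⟩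
  · exact (injective_iff_map_eq_zero _).2 fun x hx => Subtype.ext (eq_zero_of_crossProj_eq_zero A V W x.2 hx)
  · exact fun y => ⟨⟨crossSection A V W y, crossSection_mem_cr2CoSchurL31 A V W y⟩,
      LinearMap.congr_fun (crossProj_comp_crossSection A V W) y⟩

/-- for finitely generated projective modules `V`, `W` over a commutative
ring `A`, the second cross-effect of the co-Schur functor `L̃³₁` (where
`L̃³₁(V) = ker (V ⊗ Λ² V → Λ³ V)`) satisfies
`cr₂(L̃³₁)(V, W) ≅ (V ⊗ V ⊗ W) ⊕ (V ⊗ W ⊗ W)`. -/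
theorem cr2_coSchurL31_iso (A V W : Type*) [CommRing A]
    [AddCommGroup V] [Module A V] [Module.Finite A V] [Module.Projective A V]
    [AddCommGroup W] [Module A W] [Module.Finite A W] [Module.Projective A W] :
    Nonempty ((cr2CoSchurL31 A V W) ≃ₗ[A]
      (V ⊗[A] (V ⊗[A] W)) × (V ⊗[A] (W ⊗[A] W))) :=
  cr2_coSchurL31_iso_general A V W
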